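/- arXiv:quant-ph/0505091 — 2 statements merged into one kernel-verified Lean document; each statement's English description precedes it below -/
import Mathlib

section
/- For every two-qubit density matrix ρ (a 4×4 positive semidefinite matrix indexed by Fin 2 × Fin 2 with trace 1) and every decomposition of ρ into a finite family of vectors χ_k, the total (unnormalized) concurrence of the decomposition is bounded by the concurrence of assistance: ∑_k 2·|χ_k 0 0 · χ_k 1 1 − χ_k 0 1 · χ_k 1 0| ≤ Tr R(ρ). -/
open Matrix Complex Kronecker Finset
open scoped ComplexOrder

noncomputable section

abbrev TwoQubitMat := Matrix (Fin 2 × Fin 2) (Fin 2 × Fin 2) ℂ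

def sigmaY : Matrix (Fin 2) (Fin 2) ℂ := !![0, -Complex.I; Complex.I, 0]

def spinFlip (ρ : TwoQubitMat) : TwoQubitMat :=
  (sigmaY ⊗ₖ sigmaY) * ρ.map (starRingEnd ℂ) * (sigmaY ⊗ₖ sigmaY)

def matSqrt {m : Type*} [Fintype m] [DecidableEq m] (M : Matrix m m ℂ) : Matrix m m ℂ :=
  open scoped Classical in
  if h : M.PosSemidef then (h.1.eigenvectorUnitary : Matrix m m ℂ) *
    diagonal (((↑) : ℝ → ℂ) ∘ (Real.sqrt ·) ∘ h.1.eigenvalues) *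
    (star h.1.eigenvectorUnitary : Matrix m m ℂ) else 0

def Rmat (ρ : TwoQubitMat) : TwoQubitMat :=
  matSqrt (matSqrt ρ * spinFlip ρ * matSqrt ρ)

def CoA (ρ : TwoQubitMat) : ℝ := (Rmat ρ).trace.re

def lmin2 (M : Matrix (Fin 2) (Fin 2) ℂ) : ℝ :=
  if h : M.IsHermitian then min (h.eigenvalues 0) (h.eigenvalues 1) else 0

def maxEig4 (M : TwoQubitMat) : ℝ :=
  if h : M.IsHermitian then Finset.univ.sup' Finset.univ_nonempty h.eigenvalues else 0

def Conc (ρ : TwoQubitMat) : ℝ := max 0 (2 * maxEig4 (Rmat ρ) - (Rmat ρ).trace.re)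

def eigMultiset (M : TwoQubitMat) : Multiset ℝ :=
  if h : M.IsHermitian then Finset.univ.val.map h.eigenvalues else 0

def rhoAB (ψ : Fin 2 → Fin 2 → Fin 2 → ℂ) : TwoQubitMat :=
  fun p q => ∑ l, ψ p.1 p.2 l * (starRingEnd ℂ) (ψ q.1 q.2 l)

def rhoAS (ψ : Fin 2 → Fin 2 → Fin 2 → ℂ) : TwoQubitMat :=
  fun p q => ∑ j, ψ p.1 j p.2 * (starRingEnd ℂ) (ψ q.1 j q.2)

def rhoA (ψ : Fin 2 → Fin 2 → Fin 2 → ℂ) : Matrix (Fin 2) (Fin 2) ℂ :=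
  fun i i' => ∑ j, ∑ l, ψ i j l * (starRingEnd ℂ) (ψ i' j l)

/-- Concurrence of a (possibly unnormalized) two-qubit vector. -/
def conc2 (φ : Fin 2 → Fin 2 → ℂ) : ℝ :=
  2 * ‖(φ 0 0 * φ 1 1 - φ 0 1 * φ 1 0)‖

/-! Write `ρ = C Cᴴ`, the columns of `C` being the vectors `χ k`. Then `C = √ρ W` with `W Wᴴ ≤ 1`
(take `W = (√ρ)⁺ C`), and with `Y = σy ⊗ σy` the concurrence of `χ k` is
`|(Cᵀ Y C) k k| = |(Wᵀ B W) k k|` for `B = √ρᵀ Y √ρ`, which satisfies `Bᴴ B = √ρ ρ̃ √ρ`.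
Expanding `Uᴴ B V = (Eᴴ Bᴴ U)ᴴ (Eᴴ V)` in an eigenbasis `E` of `Bᴴ B` and applying Cauchy–Schwarz
to each eigenvector gives `∑ k, |(Uᴴ B V) k k| ≤ Tr √(Bᴴ B)` whenever `U Uᴴ ≤ 1` and `V Vᴴ ≤ 1`. -/

namespace Matrix

variable {m n ι : Type*} [Fintype n] [DecidableEq n] [Fintype ι]

theorem cfc_mul_cfc (A : Matrix n n ℂ) (f g : ℝ → ℝ) :
    cfc f A * cfc g A = cfc (fun x => f x * g x) A :=
  (cfc_mul f g A (A.finite_real_spectrum.continuousOn f)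
    (A.finite_real_spectrum.continuousOn g)).symm

theorem isHermitian_cfc (A : Matrix n n ℂ) (f : ℝ → ℝ) : (cfc f A).IsHermitian :=
  cfc_predicate f A

theorem PosSemidef.matSqrt_eq_cfc {A : Matrix n n ℂ} (hA : A.PosSemidef) :
    matSqrt A = cfc Real.sqrt A := by
  rw [matSqrt, dif_pos hA, hA.1.cfc_eq, IsHermitian.cfc, Unitary.conjStarAlgAut_apply]
  rfl

theorem PosSemidef.isHermitian_matSqrt {A : Matrix n n ℂ} (hA : A.PosSemidef) :
    (matSqrt A).IsHermitian := by
  rw [hA.matSqrt_eq_cfc]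
  exact isHermitian_cfc A _

theorem PosSemidef.nonneg_of_mem_spectrum {A : Matrix n n ℂ} (hA : A.PosSemidef) {x : ℝ}
    (hx : x ∈ spectrum ℝ A) : 0 ≤ x := by
  obtain ⟨i, rfl⟩ := hA.1.spectrum_real_eq_range_eigenvalues ▸ hx
  exact hA.eigenvalues_nonneg i

theorem PosSemidef.matSqrt_mul_self {A : Matrix n n ℂ} (hA : A.PosSemidef) :
    matSqrt A * matSqrt A = A := by
  rw [hA.matSqrt_eq_cfc, cfc_mul_cfc]
  conv_rhs => rw [← cfc_id' ℝ A hA.1.isSelfAdjoint]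
  exact cfc_congr fun x hx => Real.mul_self_sqrt (hA.nonneg_of_mem_spectrum hx)

theorem PosSemidef.trace_matSqrt {A : Matrix n n ℂ} (hA : A.PosSemidef) :
    (matSqrt A).trace = ∑ i, (√(hA.1.eigenvalues i) : ℂ) := by
  rw [matSqrt, dif_pos hA, trace_mul_cycle, Unitary.coe_star_mul_self, one_mul, trace_diagonal]
  rfl

theorem sum_norm_sq_eq_re_mul_conjTranspose (X : Matrix m ι ℂ) (j : m) :
    ∑ k, ‖X j k‖ ^ 2 = ((X * Xᴴ) j j).re := by
  simp [mul_apply, Complex.mul_conj, Complex.sq_norm]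

theorem PosSemidef.sum_norm_sq_mul_le [Fintype m] {V : Matrix n ι ℂ}
    (hV : (1 - V * Vᴴ).PosSemidef) (Z : Matrix m n ℂ) (j : m) :
    ∑ k, ‖(Z * V) j k‖ ^ 2 ≤ ((Z * Zᴴ) j j).re := by
  have h := (hV.mul_mul_conjTranspose_same Z).diag_nonneg (i := j)
  rw [Matrix.mul_sub, Matrix.sub_mul, Matrix.mul_one, ← Matrix.mul_assoc, Matrix.mul_assoc _ Vᴴ,
    ← conjTranspose_mul, sub_apply, Complex.le_def] at h
  rw [sum_norm_sq_eq_re_mul_conjTranspose]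
  simpa using h.1

theorem PosSemidef.exists_eq_matSqrt_mul {A : Matrix n n ℂ} (hA : A.PosSemidef)
    {C : Matrix n ι ℂ} (hC : C * Cᴴ = A) :
    ∃ W : Matrix n ι ℂ, C = matSqrt A * W ∧ (1 - W * Wᴴ).PosSemidef := by
  -- As `(√0)⁻¹ = 0`, `S` is the pseudo-inverse of `√A` and `√A * S` the projection onto its range.
  set S := cfc (fun x => (√x)⁻¹) A
  have hRSR : matSqrt A * S * matSqrt A = matSqrt A := by
    rw [hA.matSqrt_eq_cfc, cfc_mul_cfc, cfc_mul_cfc]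
    refine cfc_congr fun x _ => ?_
    by_cases hx : √x = 0 <;> field_simp [hx]
  have hSR : S * matSqrt A = matSqrt A * S := by
    rw [hA.matSqrt_eq_cfc]
    exact (cfc_commute_cfc _ _ A).eq.symm
  have hS : Sᴴ = S := (isHermitian_cfc A _).eq
  set P := matSqrt A * S
  have hPP : P * P = P := by rw [← Matrix.mul_assoc, hRSR]
  have hPH : Pᴴ = P := by
    rw [conjTranspose_mul, hS, hA.isHermitian_matSqrt.eq, hSR]
  refine ⟨S * C, ?_, ?_⟩
  · have h : (1 - P) * (C * Cᴴ) = 0 := by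
      rw [hC, ← hA.matSqrt_mul_self, Matrix.sub_mul, Matrix.one_mul, ← Matrix.mul_assoc, hRSR,
        sub_self]
    rwa [mul_self_mul_conjTranspose_eq_zero, Matrix.sub_mul, Matrix.one_mul, sub_eq_zero,
      Matrix.mul_assoc] at h
  · have hWW : S * C * (S * C)ᴴ = P := by
      calc S * C * (S * C)ᴴ = S * (C * Cᴴ) * S := by
            rw [conjTranspose_mul, hS]
            simp only [Matrix.mul_assoc]
        _ = (S * matSqrt A) * (matSqrt A * S) := by
            simp only [hC, Matrix.mul_assoc]
            rw [← Matrix.mul_assoc (matSqrt A) (matSqrt A), hA.matSqrt_mul_self]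
        _ = P := by rw [hSR, hPP]
    have h1P : (1 - P)ᴴ * (1 - P) = 1 - P := by
      simp only [conjTranspose_sub, conjTranspose_one, hPH, Matrix.sub_mul, Matrix.mul_sub,
        Matrix.one_mul, Matrix.mul_one, hPP, sub_self, sub_zero]
    rw [hWW, ← h1P]
    exact posSemidef_conjTranspose_mul_self _

theorem sum_norm_diag_conjTranspose_mul_le [Fintype m] (X Y : Matrix m ι ℂ) :
    ∑ k, ‖(Xᴴ * Y) k k‖ ≤ ∑ j, √(∑ k, ‖X j k‖ ^ 2) * √(∑ k, ‖Y j k‖ ^ 2) :=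
  calc ∑ k, ‖(Xᴴ * Y) k k‖ ≤ ∑ k, ∑ j, ‖X j k‖ * ‖Y j k‖ := by
        refine Finset.sum_le_sum fun k _ => (norm_sum_le _ _).trans_eq ?_
        simp [conjTranspose_apply]
    _ = ∑ j, ∑ k, ‖X j k‖ * ‖Y j k‖ := Finset.sum_comm
    _ ≤ _ := Finset.sum_le_sum fun j _ => Real.sum_mul_le_sqrt_mul_sqrt _ _ _

theorem sum_norm_diag_le_trace_matSqrt (B : Matrix n n ℂ) {U V : Matrix n ι ℂ}
    (hU : (1 - U * Uᴴ).PosSemidef) (hV : (1 - V * Vᴴ).PosSemidef) :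
    ∑ k, ‖(Uᴴ * B * V) k k‖ ≤ (matSqrt (Bᴴ * B)).trace.re := by
  have hM := posSemidef_conjTranspose_mul_self B
  set E : Matrix n n ℂ := (hM.1.eigenvectorUnitary : Matrix n n ℂ)
  have hE : E * Eᴴ = 1 := Unitary.coe_mul_star_self _
  have hE' : Eᴴ * E = 1 := Unitary.coe_star_mul_self _
  have hdiag : Eᴴ * (Bᴴ * B) * E = diagonal (RCLike.ofReal ∘ hM.1.eigenvalues) := by
    rw [← hM.1.conjStarAlgAut_star_eigenvectorUnitary, Unitary.conjStarAlgAut_star_apply]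
    rfl
  have hUBV : Uᴴ * B * V = (Eᴴ * Bᴴ * U)ᴴ * (Eᴴ * V) := by
    simp only [conjTranspose_mul, conjTranspose_conjTranspose, Matrix.mul_assoc]
    rw [← Matrix.mul_assoc E, hE, Matrix.one_mul]
  have hX (j : n) : ∑ k, ‖(Eᴴ * Bᴴ * U) j k‖ ^ 2 ≤ hM.1.eigenvalues j := by
    refine (hU.sum_norm_sq_mul_le _ j).trans_eq ?_
    rw [conjTranspose_mul, conjTranspose_conjTranspose, conjTranspose_conjTranspose,
      ← Matrix.mul_assoc, Matrix.mul_assoc _ Bᴴ, hdiag]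
    simp
  have hY (j : n) : ∑ k, ‖(Eᴴ * V) j k‖ ^ 2 ≤ 1 := by
    refine (hV.sum_norm_sq_mul_le _ j).trans_eq ?_
    rw [conjTranspose_conjTranspose, hE']
    simp
  rw [hM.trace_matSqrt, hUBV, Complex.re_sum]
  refine (sum_norm_diag_conjTranspose_mul_le _ _).trans (Finset.sum_le_sum fun j _ => ?_)
  calc √(∑ k, ‖(Eᴴ * Bᴴ * U) j k‖ ^ 2) * √(∑ k, ‖(Eᴴ * V) j k‖ ^ 2)
      ≤ √(hM.1.eigenvalues j) * 1 := by
        gcongr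
        · exact hX j
        · exact Real.sqrt_le_one.mpr (hY j)
    _ = _ := by simp

end Matrix

theorem sigmaY_conjTranspose : sigmaYᴴ = sigmaY := by
  ext i j
  fin_cases i <;> fin_cases j <;> simp [sigmaY]

theorem spinFlip_eq_of_isHermitian {ρ : TwoQubitMat} (hρ : ρ.IsHermitian) :
    spinFlip ρ = (sigmaY ⊗ₖ sigmaY) * ρᵀ * (sigmaY ⊗ₖ sigmaY) := by
  rw [spinFlip]
  congr 2
  ext p q
  simp [← hρ.apply p q]

theorem conc2_eq_norm_diag_transpose_mul_mul {ι : Type*} [Fintype ι]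
    (C : Matrix (Fin 2 × Fin 2) ι ℂ) (k : ι) :
    conc2 (fun i j => C (i, j) k) = ‖(Cᵀ * (sigmaY ⊗ₖ sigmaY) * C) k k‖ := by
  have h : (Cᵀ * (sigmaY ⊗ₖ sigmaY) * C) k k
      = -2 * (C (0, 0) k * C (1, 1) k - C (0, 1) k * C (1, 0) k) := by
    simp only [sigmaY, mul_apply, transpose_apply, kroneckerMap_apply, of_apply, cons_val',
      cons_val_fin_one, Fintype.sum_prod_type, Fin.sum_univ_two, Fin.isValue, cons_val_zero,
      cons_val_one, mul_zero, zero_add, mul_neg, add_zero, zero_mul, I_mul_I, mul_one, neg_mul,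
      neg_zero, neg_neg]
    ring
  rw [conc2, h, norm_mul]
  simp

theorem Matrix.PosSemidef.conjTranspose_mul_self_eq_matSqrt_mul_spinFlip_mul {ρ : TwoQubitMat}
    (hρ : ρ.PosSemidef) :
    ((matSqrt ρ)ᵀ * (sigmaY ⊗ₖ sigmaY) * matSqrt ρ)ᴴ *
        ((matSqrt ρ)ᵀ * (sigmaY ⊗ₖ sigmaY) * matSqrt ρ) =
      matSqrt ρ * spinFlip ρ * matSqrt ρ := by
  have hR := hρ.isHermitian_matSqrt
  have hRR : (matSqrt ρ)ᵀ * (matSqrt ρ)ᵀ = ρᵀ := by rw [← transpose_mul, hρ.matSqrt_mul_self]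
  simp only [conjTranspose_mul, conjTranspose_kronecker, sigmaY_conjTranspose, hR.eq,
    hR.transpose.eq, spinFlip_eq_of_isHermitian hρ.1, Matrix.mul_assoc]
  rw [← Matrix.mul_assoc (matSqrt ρ)ᵀ, hRR]

theorem decomposition_concurrence_le_CoA_general (ρ : TwoQubitMat)
    (hpsd : ρ.PosSemidef)
    (ι : Type) [Fintype ι] (χ : ι → Fin 2 → Fin 2 → ℂ)
    (hdec : ∀ i j i' j' : Fin 2,
      ρ (i, j) (i', j') = ∑ k, χ k i j * (starRingEnd ℂ) (χ k i' j')) :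
    ∑ k, conc2 (χ k) ≤ CoA ρ := by
  let C : Matrix (Fin 2 × Fin 2) ι ℂ := fun p k => χ k p.1 p.2
  have hC : C * Cᴴ = ρ := by
    ext ⟨i, j⟩ ⟨i', j'⟩
    rw [hdec, mul_apply]
    rfl
  obtain ⟨W, hCW, hW⟩ := hpsd.exists_eq_matSqrt_mul hC
  have hWT : (1 - Wᵀᴴ * Wᵀᴴᴴ).PosSemidef := by
    rw [conjTranspose_conjTranspose, conjTranspose_transpose_eq_transpose_conjTranspose,
      ← transpose_mul, ← transpose_one, ← transpose_sub]
    exact hW.transpose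
  calc ∑ k, conc2 (χ k)
      = ∑ k, ‖(Wᵀᴴᴴ * ((matSqrt ρ)ᵀ * (sigmaY ⊗ₖ sigmaY) * matSqrt ρ) * W) k k‖ := by
        refine Finset.sum_congr rfl fun k _ => ?_
        rw [conc2_eq_norm_diag_transpose_mul_mul C k, hCW, conjTranspose_conjTranspose,
          transpose_mul]
        simp only [Matrix.mul_assoc]
    _ ≤ _ := Matrix.sum_norm_diag_le_trace_matSqrt _ hWT hW
    _ = CoA ρ := by rw [hpsd.conjTranspose_mul_self_eq_matSqrt_mul_spinFlip_mul]; rfl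

theorem decomposition_concurrence_le_CoA (ρ : TwoQubitMat)
    (hpsd : ρ.PosSemidef) (htr : ρ.trace = 1)
    (ι : Type) [Fintype ι] (χ : ι → Fin 2 → Fin 2 → ℂ)
    (hdec : ∀ i j i' j' : Fin 2,
      ρ (i, j) (i', j') = ∑ k, χ k i j * (starRingEnd ℂ) (χ k i' j')) :
    ∑ k, conc2 (χ k) ≤ CoA ρ :=
  decomposition_concurrence_le_CoA_general ρ hpsd ι χ hdec
end
end

section
/- Let ψ : Fin 2 → Fin 2 → Fin n → ℂ be a unit vector whose coefficient matrices A^l = (ψ i j l)_{ij} satisfy: (A^l)† A^l is diagonal with diagonal entries q₀^l ≥ q₁^l ≥ 0 for every l : Fin n. Let q₁ = ∑_l q₁^l and let p₁ be the smallest eigenvalue of ρ_A = ∑_l A^l (A^l)†, and assume q₁ ≤ p₁. Then the maximum, over all finite families of matrices (M_m), M_m ∈ Matrix (Fin n) (Fin n) ℂ with ∑_m (M_m)† M_m = 1 (generalized measurements by Sapna), of the average residual entanglement ∑_m 2·λ_min(σ_B^m) equals 2q₁ = min{2p₁, 2q₁}, where σ_B^m(j,j') = ∑_{i,l} c^m(i,j,l)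 · conj(c^m(i,j',l)) with conditional amplitudes c^m(i,j,l) = ∑_{l'} (M_m)_{l l'} ψ i j l'. Moreover this maximum is attained by the projective measurement M_l = |l⟩⟨l|. -/
open Matrix Complex Kronecker Finset
open scoped ComplexOrder

noncomputable section

/-- Coefficient matrix `A^l = (ψ i j l)_{ij}` of a `2×2×n` pure state. -/
def coeffMat {n : ℕ} (ψ : Fin 2 → Fin 2 → Fin n → ℂ) (l : Fin n) :
    Matrix (Fin 2) (Fin 2) ℂ :=
  Matrix.of fun i j => ψ i j l

/-- Conditional (unnormalized) amplitudes after Sapna applies the Kraus operator `M`. -/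
def condAmp {n : ℕ} (ψ : Fin 2 → Fin 2 → Fin n → ℂ) (M : Matrix (Fin n) (Fin n) ℂ)
    (i j : Fin 2) (l : Fin n) : ℂ :=
  ∑ l', M l l' * ψ i j l'

/-- Bob's (unnormalized) reduced density matrix conditioned on Sapna's outcome `M`. -/
def sigmaB {n : ℕ} (ψ : Fin 2 → Fin 2 → Fin n → ℂ) (M : Matrix (Fin n) (Fin n) ℂ) :
    Matrix (Fin 2) (Fin 2) ℂ :=
  fun j j' => ∑ i, ∑ l, condAmp ψ M i j l * (starRingEnd ℂ) (condAmp ψ M i j' l)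

/-! The projective measurement `|l⟩⟨l|` leaves Bob with `σ_B^l = ((A^l)† A^l)ᵀ`, which is diagonal
with smaller entry `q₁^l`; so it achieves `∑_l 2 q₁^l = 2 q₁`. Conversely, for any measurement
`λ_min(σ_B^m) ≤ (σ_B^m)₁₁`, and completeness `∑_m M_m† M_m = 1` makes the `σ_B^m` sum to Bob's
reduced density matrix `ρ_B`, whose `(1,1)` entry is `q₁`. -/

lemma min_eq_min_of_add_eq_of_mul_eq {x y a b : ℝ} (hs : x + y = a + b) (hp : x * y = a * b) :
    min x y = min a b := by
  have hx : (x - a) * (x - b) = 0 := by linear_combination x * hs - hp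
  rcases mul_eq_zero.1 hx with h | h
  · obtain rfl : y = b := by linarith [sub_eq_zero.1 h]
    rw [sub_eq_zero.1 h]
  · obtain rfl : y = a := by linarith [sub_eq_zero.1 h]
    rw [sub_eq_zero.1 h, min_comm]

lemma Matrix.sum_single_conjTranspose_mul_single {m α : Type*} [Fintype m] [DecidableEq m]
    [Semiring α] [StarRing α] :
    ∑ l : m, (single l l (1 : α))ᴴ * single l l 1 = 1 := by
  simp only [conjTranspose_single, star_one, single_mul_single_same, mul_one, sum_single_one]

namespace Matrix.IsHermitian

variable {M : Matrix (Fin 2) (Fin 2) ℂ} (hM : M.IsHermitian)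

lemma eigenvalues_zero_add_eigenvalues_one :
    hM.eigenvalues 0 + hM.eigenvalues 1 = (M 0 0).re + (M 1 1).re := by
  simpa [trace_fin_two, Fin.sum_univ_two] using congrArg re hM.trace_eq_sum_eigenvalues.symm

lemma eigenvalues_zero_mul_eigenvalues_one :
    hM.eigenvalues 0 * hM.eigenvalues 1 = (M 0 0).re * (M 1 1).re - normSq (M 0 1) := by
  have h10 : M 1 0 = (starRingEnd ℂ) (M 0 1) := by
    simpa [conjTranspose_apply] using (congrFun (congrFun hM 1) 0).symm
  have hdet := hM.det_eq_prod_eigenvalues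
  rw [det_fin_two, h10, ← hM.coe_re_apply_self 0, ← hM.coe_re_apply_self 1, mul_conj] at hdet
  simpa [Fin.prod_univ_two] using (congrArg re hdet).symm

end Matrix.IsHermitian

section lmin2

variable {M : Matrix (Fin 2) (Fin 2) ℂ}

lemma lmin2_le_re_apply_self (hM : M.IsHermitian) (j : Fin 2) : lmin2 M ≤ (M j j).re := by
  rw [lmin2, dif_pos hM]
  have hs := hM.eigenvalues_zero_add_eigenvalues_one
  have hp := hM.eigenvalues_zero_mul_eigenvalues_one
  -- both eigenvalues exceeding a diagonal entry `d` would make `(λ₀ - d)(λ₁ - d) = -|M₀₁|²` positive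
  have key : (hM.eigenvalues 0 - (M j j).re) * (hM.eigenvalues 1 - (M j j).re) = -normSq (M 0 1) := by
    fin_cases j <;> simp only [Fin.zero_eta, Fin.mk_one] <;> linear_combination hp - (M _ _).re * hs
  by_contra! h
  rw [lt_min_iff] at h
  nlinarith [normSq_nonneg (M 0 1)]

lemma lmin2_of_apply_zero_one_eq_zero (hM : M.IsHermitian) (h01 : M 0 1 = 0) :
    lmin2 M = min (M 0 0).re (M 1 1).re := by
  rw [lmin2, dif_pos hM]
  refine min_eq_min_of_add_eq_of_mul_eq hM.eigenvalues_zero_add_eigenvalues_one ?_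
  simp [hM.eigenvalues_zero_mul_eigenvalues_one, h01]

end lmin2

section sigmaB

variable {n : ℕ} (ψ : Fin 2 → Fin 2 → Fin n → ℂ)

lemma sigmaB_isHermitian (M : Matrix (Fin n) (Fin n) ℂ) : (sigmaB ψ M).IsHermitian := by
  ext j j'
  simp only [conjTranspose_apply, sigmaB, star_sum, star_mul', star_def, conj_conj, mul_comm]

lemma sigmaB_apply_eq_dotProduct (M : Matrix (Fin n) (Fin n) ℂ) (j j' : Fin 2) :
    sigmaB ψ M j j' = ∑ i, star (fun l => ψ i j' l) ⬝ᵥ ((Mᴴ * M) *ᵥ fun l => ψ i j l) := by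
  refine Finset.sum_congr rfl fun i _ => ?_
  rw [← mulVec_mulVec, dotProduct_mulVec, ← star_mulVec, dotProduct_comm]
  rfl

lemma sum_sigmaB_eq_sigmaB_one {ι : Type*} [Fintype ι] (M : ι → Matrix (Fin n) (Fin n) ℂ)
    (hM : ∑ k, (M k)ᴴ * M k = 1) : ∑ k, sigmaB ψ (M k) = sigmaB ψ 1 := by
  ext j j'
  simp only [Matrix.sum_apply, sigmaB_apply_eq_dotProduct]
  rw [Finset.sum_comm]
  simp only [← dotProduct_sum, ← sum_mulVec, hM, conjTranspose_one, mul_one]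

lemma sigmaB_single (l : Fin n) :
    sigmaB ψ (single l l 1) = ((coeffMat ψ l)ᴴ * coeffMat ψ l)ᵀ := by
  ext j j'
  simp [sigmaB, condAmp, coeffMat, mul_apply, single, ite_and, mul_comm]

lemma sigmaB_one : sigmaB ψ 1 = ∑ l, ((coeffMat ψ l)ᴴ * coeffMat ψ l)ᵀ := by
  rw [← sum_sigmaB_eq_sigmaB_one ψ _ sum_single_conjTranspose_mul_single]
  simp only [sigmaB_single]

lemma sum_lmin2_sigmaB_le {ι : Type*} [Fintype ι] (M : ι → Matrix (Fin n) (Fin n) ℂ)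
    (hM : ∑ k, (M k)ᴴ * M k = 1) (j : Fin 2) :
    ∑ k, lmin2 (sigmaB ψ (M k)) ≤ ∑ l, (((coeffMat ψ l)ᴴ * coeffMat ψ l) j j).re :=
  calc ∑ k, lmin2 (sigmaB ψ (M k))
      ≤ ∑ k, (sigmaB ψ (M k) j j).re :=
        Finset.sum_le_sum fun k _ => lmin2_le_re_apply_self (sigmaB_isHermitian ψ (M k)) j
    _ = ∑ l, (((coeffMat ψ l)ᴴ * coeffMat ψ l) j j).re := by
        rw [← re_sum, ← Matrix.sum_apply, sum_sigmaB_eq_sigmaB_one ψ M hM, sigmaB_one,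
          Matrix.sum_apply, re_sum]
        simp only [transpose_apply]

end sigmaB

theorem max_average_residual_entanglement_general (n : ℕ) (ψ : Fin 2 → Fin 2 → Fin n → ℂ)
    (hdiag : ∀ l : Fin n, ((coeffMat ψ l)ᴴ * coeffMat ψ l).IsDiag)
    (hord : ∀ l : Fin n,
      0 ≤ (((coeffMat ψ l)ᴴ * coeffMat ψ l) 1 1).re ∧
      (((coeffMat ψ l)ᴴ * coeffMat ψ l) 1 1).re ≤
        (((coeffMat ψ l)ᴴ * coeffMat ψ l) 0 0).re)
    (q₁ : ℝ) (hq₁ : q₁ = ∑ l, (((coeffMat ψ l)ᴴ * coeffMat ψ l) 1 1).re)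
    (p₁ : ℝ) (hqp : q₁ ≤ p₁) :
    IsGreatest {x : ℝ | ∃ (m : ℕ) (M : Fin m → Matrix (Fin n) (Fin n) ℂ),
        (∑ k, (M k)ᴴ * M k = 1) ∧ x = ∑ k, 2 * lmin2 (sigmaB ψ (M k))}
      (2 * q₁) ∧
    2 * q₁ = min (2 * p₁) (2 * q₁) ∧
    (∑ l : Fin n, (Matrix.single l l (1 : ℂ))ᴴ * Matrix.single l l (1 : ℂ) = 1) ∧
    ∑ l : Fin n, 2 * lmin2 (sigmaB ψ (Matrix.single l l (1 : ℂ))) = 2 * q₁ := by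
  have hlmin (l : Fin n) : lmin2 (sigmaB ψ (single l l 1)) =
      (((coeffMat ψ l)ᴴ * coeffMat ψ l) 1 1).re := by
    have h01 : sigmaB ψ (single l l 1) 0 1 = 0 := by
      rw [sigmaB_single]; exact (hdiag l).transpose (by decide)
    rw [lmin2_of_apply_zero_one_eq_zero (sigmaB_isHermitian ψ _) h01, sigmaB_single]
    exact min_eq_right (hord l).2
  have hattain : ∑ l : Fin n, 2 * lmin2 (sigmaB ψ (single l l 1)) = 2 * q₁ := by
    simp only [hlmin, hq₁, Finset.mul_sum]
  refine ⟨⟨⟨n, fun l => single l l 1, sum_single_conjTranspose_mul_single, hattain.symm⟩, ?_⟩,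
    (min_eq_right (by linarith)).symm, sum_single_conjTranspose_mul_single, hattain⟩
  rintro x ⟨m, M, hM, rfl⟩
  rw [← Finset.mul_sum, hq₁]
  exact mul_le_mul_of_nonneg_left (sum_lmin2_sigmaB_le ψ M hM 1) zero_le_two

theorem max_average_residual_entanglement (n : ℕ) (ψ : Fin 2 → Fin 2 → Fin n → ℂ)
    (hψ : ∑ i, ∑ j, ∑ l, Complex.normSq (ψ i j l) = 1)
    (hdiag : ∀ l : Fin n, ((coeffMat ψ l)ᴴ * coeffMat ψ l).IsDiag)
    (hord : ∀ l : Fin n,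
      0 ≤ (((coeffMat ψ l)ᴴ * coeffMat ψ l) 1 1).re ∧
      (((coeffMat ψ l)ᴴ * coeffMat ψ l) 1 1).re ≤
        (((coeffMat ψ l)ᴴ * coeffMat ψ l) 0 0).re)
    (q₁ : ℝ) (hq₁ : q₁ = ∑ l, (((coeffMat ψ l)ᴴ * coeffMat ψ l) 1 1).re)
    (p₁ : ℝ) (hp₁ : p₁ = lmin2 (∑ l, coeffMat ψ l * (coeffMat ψ l)ᴴ))
    (hqp : q₁ ≤ p₁) :
    IsGreatest {x : ℝ | ∃ (m : ℕ) (M : Fin m → Matrix (Fin n) (Fin n) ℂ),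
        (∑ k, (M k)ᴴ * M k = 1) ∧ x = ∑ k, 2 * lmin2 (sigmaB ψ (M k))}
      (2 * q₁) ∧
    2 * q₁ = min (2 * p₁) (2 * q₁) ∧
    (∑ l : Fin n, (Matrix.single l l (1 : ℂ))ᴴ * Matrix.single l l (1 : ℂ) = 1) ∧
    ∑ l : Fin n, 2 * lmin2 (sigmaB ψ (Matrix.single l l (1 : ℂ))) = 2 * q₁ :=
  max_average_residual_entanglement_general n ψ hdiag hord q₁ hq₁ p₁ hqp
end
end
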